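/- Let μ be an unconditional log-concave measure on R^n, K a symmetric convex body, and u a standard basis vector. Then μ((S_u K)^o) ≥ μ(K^o). -/

import Mathlib

/-!
Integrate over the hyperplanes `{x | x i = γ}` one at a time, writing `x(w)` for the point of such a
hyperplane with remaining coordinates `w`; then `x(-w)` is the reflection of `x(w)` in the line
`ℝu`. Because `K = -K`, the slice inclusion of Meyer and Pajor gives `x((v + w) / 2) ∈ (S_u K)°`
whenever `x(v), x(-w) ∈ K°`; because `f` is log-concave and unconditional,
`f(x(v)) f(x(-w)) ≤ f(x((v + w) / 2))²`. As `w ↦ -w` preserves Lebesgue measure, the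
Prékopa–Leindler inequality on the hyperplane bounds the mass of the slice of `K°` by that of
`(S_u K)°`. Prékopa–Leindler is tensorised from dimension one, where it follows from the
layer-cake formula and the one-dimensional Brunn–Minkowski inequality applied to level sets at a
common height, after rescaling the two functions to a common supremum.
-/

open MeasureTheory Set Pointwise
open scoped InnerProductSpace ENNReal

noncomputable section

/-- `ℝ^n` with the Euclidean structure. -/
abbrev E (n : ℕ) := EuclideanSpace ℝ (Fin n)

/-- The polar body `K° = {y : ∀ x ∈ K, ⟨x,y⟩ ≤ 1}`. -/
def polarBody {n : ℕ} (K : Set (E n)) : Set (E n) := {y | ∀ x ∈ K, ⟪x, y⟫_ℝ ≤ 1}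

/-- A set is unconditional if it is invariant under coordinate-wise sign changes. -/
def Uncond {n : ℕ} (K : Set (E n)) : Prop :=
  ∀ x ∈ K, ∀ ε : Fin n → ℝ, (∀ i, ε i = 1 ∨ ε i = -1) →
    (WithLp.toLp 2 (fun i => ε i * x i) : E n) ∈ K

/-- A convex body: compact, convex, with nonempty interior. -/
def IsConvexBody {n : ℕ} (K : Set (E n)) : Prop :=
  IsCompact K ∧ Convex ℝ K ∧ (interior K).Nonempty

/-- The Steiner symmetral of `K` in direction `u`: over each point of `u^⊥` the fiber
`K_y` is replaced by `(K_y + (-K_y))/2`. -/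
def steiner {n : ℕ} (u : E n) (K : Set (E n)) : Set (E n) :=
  {x | ∃ s t : ℝ, (x - ⟪x, u⟫_ℝ • u + s • u) ∈ K ∧ (x - ⟪x, u⟫_ℝ • u + t • u) ∈ K ∧
    ⟪x, u⟫_ℝ = (s - t) / 2}

/-- The geometric mean body `K^{1/2} L^{1/2}`. -/
def geomMean {n : ℕ} (K L : Set (E n)) : Set (E n) :=
  {z | ∃ x ∈ K, ∃ y ∈ L, ∀ i, |z i| = |x i| ^ ((1 : ℝ) / 2) * |y i| ^ ((1 : ℝ) / 2)}

lemma Real.volume_setOf_ofReal_lt_inter_Ioi (c : ℝ≥0∞) :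
    volume ({t : ℝ | ENNReal.ofReal t < c} ∩ Ioi 0) = c := by
  rcases eq_or_ne c ∞ with rfl | hc
  · simp
  have : {t : ℝ | ENNReal.ofReal t < c} ∩ Ioi 0 = Ioo 0 c.toReal := by
    ext t
    simp only [mem_inter_iff, mem_ofPred_eq, mem_Ioi, mem_Ioo]
    exact ⟨fun h => ⟨h.2, (ENNReal.ofReal_lt_iff_lt_toReal h.2.le hc).1 h.1⟩,
      fun h => ⟨(ENNReal.ofReal_lt_iff_lt_toReal h.1.le hc).2 h.2, h.1⟩⟩
  rw [this, Real.volume_Ioo, sub_zero, ENNReal.ofReal_toReal hc]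

lemma lintegral_eq_lintegral_meas_ofReal_lt {α : Type*} [MeasurableSpace α] (μ : Measure α)
    [SFinite μ] {F : α → ℝ≥0∞} (hF : Measurable F) :
    ∫⁻ a, F a ∂μ = ∫⁻ t in Ioi 0, μ {a | ENNReal.ofReal t < F a} := by
  have hR : MeasurableSet {p : α × ℝ | ENNReal.ofReal p.2 < F p.1} :=
    measurableSet_lt (ENNReal.measurable_ofReal.comp measurable_snd) (hF.comp measurable_fst)
  have := (Measure.prod_apply (μ := μ) (ν := volume.restrict (Ioi (0 : ℝ))) hR).symm.trans
    (Measure.prod_apply_symm hR)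
  simpa only [Measure.restrict_apply' measurableSet_Ioi, preimage_ofPred_eq,
    Real.volume_setOf_ofReal_lt_inter_Ioi] using this

lemma Real.volume_add_volume_le_volume_add_of_isCompact {K L : Set ℝ} (hK : IsCompact K)
    (hL : IsCompact L) (hK₀ : K.Nonempty) (hL₀ : L.Nonempty) :
    volume K + volume L ≤ volume (K + L) := by
  set a := sSup K
  set b := sInf L
  have haK : a ∈ K := hK.sSup_mem hK₀
  have hbL : b ∈ L := hL.sInf_mem hL₀
  have hKb : volume (K + {b}) = volume K := by
    rw [add_singleton, image_add_right, measure_preimage_add_right]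
  have haL : volume ({a} + L) = volume L := by
    rw [singleton_add, image_add_left, measure_preimage_add]
  -- `K + b` and `a + L` overlap only at their common endpoint `a + b`
  have hinter : (K + {b}) ∩ ({a} + L) ⊆ {a + b} := by
    rintro _ ⟨hx, hy⟩
    rw [add_singleton] at hx
    rw [singleton_add] at hy
    obtain ⟨x, hx, rfl⟩ := hx
    obtain ⟨y, hy, hxy⟩ := hy
    have : x = a := by linarith [le_csSup hK.bddAbove hx, csInf_le hL.bddBelow hy]
    rw [this, mem_singleton_iff]
  have haL_meas : MeasurableSet ({a} + L) := (isCompact_singleton.add hL).isClosed.measurableSet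
  calc volume K + volume L = volume (K + {b}) + volume ({a} + L) := by rw [hKb, haL]
    _ = volume ((K + {b}) ∪ ({a} + L)) := by
      rw [← measure_union_add_inter _ haL_meas, measure_mono_null hinter (measure_singleton _),
        add_zero]
    _ ≤ volume (K + L) := measure_mono (union_subset
      (add_subset_add_left (singleton_subset_iff.2 hbL))
      (add_subset_add_right (singleton_subset_iff.2 haK)))

lemma Real.volume_add_volume_le_volume_add {A B : Set ℝ} (hA : MeasurableSet A)
    (hB : MeasurableSet B) (hA₀ : A.Nonempty) (hB₀ : B.Nonempty) :
    volume A + volume B ≤ volume (A + B) := by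
  obtain ⟨a, ha⟩ := hA₀
  obtain ⟨b, hb⟩ := hB₀
  rw [hA.measure_eq_iSup_isCompact, hB.measure_eq_iSup_isCompact]
  simp_rw [iSup_and']
  refine ENNReal.biSup_add_biSup_le' ⟨∅, empty_subset _, isCompact_empty⟩
    ⟨∅, empty_subset _, isCompact_empty⟩ fun K ⟨hKA, hK⟩ L ⟨hLB, hL⟩ => ?_
  calc volume K + volume L ≤ volume (insert a K) + volume (insert b L) :=
        add_le_add (measure_mono (subset_insert _ _)) (measure_mono (subset_insert _ _))
    _ ≤ volume (insert a K + insert b L) :=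
        volume_add_volume_le_volume_add_of_isCompact (hK.insert a) (hL.insert b)
          (insert_nonempty _ _) (insert_nonempty _ _)
    _ ≤ volume (A + B) :=
        measure_mono (add_subset_add (insert_subset ha hKA) (insert_subset hb hLB))

lemma Real.volume_add_volume_le_two_mul_volume_of_midpoint_mem {A B S : Set ℝ}
    (hA : MeasurableSet A) (hB : MeasurableSet B) (hA₀ : A.Nonempty) (hB₀ : B.Nonempty)
    (hS : ∀ x ∈ A, ∀ y ∈ B, (x + y) / 2 ∈ S) :
    volume A + volume B ≤ 2 * volume S := by
  have hsub : (2⁻¹ : ℝ) • (A + B) ⊆ S := by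
    rintro _ ⟨_, ⟨x, hx, y, hy, rfl⟩, rfl⟩
    simpa [div_eq_inv_mul] using hS x hx y hy
  calc volume A + volume B ≤ volume (A + B) := volume_add_volume_le_volume_add hA hB hA₀ hB₀
    _ = 2 * volume ((2⁻¹ : ℝ) • (A + B)) := by
      rw [Measure.addHaar_smul, Module.finrank_self, pow_one, abs_of_pos (by norm_num),
        ENNReal.ofReal_inv_of_pos two_pos, ENNReal.ofReal_ofNat, ← mul_assoc,
        ENNReal.mul_inv_cancel two_ne_zero ENNReal.ofNat_ne_top, one_mul]
    _ ≤ 2 * volume S := by gcongr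

def MidpointPrekopaLeindler {α : Type*} [MeasurableSpace α] (μ : Measure α)
    (mid : α → α → α) : Prop :=
  ∀ f g h : α → ℝ≥0∞, Measurable f → Measurable g → Measurable h →
    (∀ x y, f x * g y ≤ h (mid x y) ^ 2) →
    (∫⁻ x, f x ∂μ) * (∫⁻ x, g x ∂μ) ≤ (∫⁻ x, h x ∂μ) ^ 2

lemma ENNReal.mul_le_sq_of_add_le_two_mul {a b c : ℝ≥0∞} (h : a + b ≤ 2 * c) : a * b ≤ c ^ 2 := by
  have amgm : 4 * a * b ≤ (a + b) ^ 2 := by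
    rcases eq_or_ne a ∞ with rfl | ha
    · simp
    rcases eq_or_ne b ∞ with rfl | hb
    · simp
    lift a to NNReal using ha
    lift b to NNReal using hb
    exact_mod_cast four_mul_le_sq_add a b
  have : 4 * (a * b) ≤ 4 * c ^ 2 := by
    calc 4 * (a * b) = 4 * a * b := (mul_assoc _ _ _).symm
      _ ≤ (a + b) ^ 2 := amgm
      _ ≤ (2 * c) ^ 2 := by gcongr
      _ = 4 * c ^ 2 := by rw [mul_pow]; norm_num
  exact (ENNReal.mul_le_mul_iff_right (by norm_num) (by norm_num)).1 this

section Real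

variable {f g h : ℝ → ℝ≥0∞}

lemma lintegral_add_lintegral_le_two_mul_of_iSup_eq (hf : Measurable f) (hg : Measurable g)
    (hh : Measurable h) (hfg : ∀ x y, f x * g y ≤ h ((x + y) / 2) ^ 2)
    (hsup : ⨆ x, f x = ⨆ x, g x) :
    (∫⁻ x, f x) + ∫⁻ x, g x ≤ 2 * ∫⁻ x, h x := by
  have hlevel : ∀ s : ℝ≥0∞, volume {x | s < f x} + volume {x | s < g x} ≤
      2 * volume {x | s < h x} := by
    intro s
    -- as `f` and `g` have the same supremum, their level sets at height `s` are empty together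
    by_cases hs : s < ⨆ x, f x
    · obtain ⟨x₀, hx₀⟩ := lt_iSup_iff.1 hs
      obtain ⟨y₀, hy₀⟩ := lt_iSup_iff.1 (hsup ▸ hs)
      refine Real.volume_add_volume_le_two_mul_volume_of_midpoint_mem
        (measurableSet_lt measurable_const hf) (measurableSet_lt measurable_const hg)
        ⟨x₀, hx₀⟩ ⟨y₀, hy₀⟩ fun x hx y hy => ?_
      show s < h ((x + y) / 2)
      refine lt_of_not_ge fun hle => ?_
      have : s * s < s ^ 2 := (ENNReal.mul_lt_mul hx hy).trans_le
        ((hfg x y).trans (pow_le_pow_left₀ zero_le hle 2))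
      exact (sq s ▸ this).false
    · have hf_empty : {x | s < f x} = ∅ :=
        eq_empty_of_forall_notMem fun x hx => hs (lt_of_lt_of_le hx (le_iSup f x))
      have hg_empty : {x | s < g x} = ∅ :=
        eq_empty_of_forall_notMem fun x hx => hs (hsup ▸ lt_of_lt_of_le hx (le_iSup g x))
      simp [hf_empty, hg_empty]
  rw [lintegral_eq_lintegral_meas_ofReal_lt volume hf,
    lintegral_eq_lintegral_meas_ofReal_lt volume hg,
    lintegral_eq_lintegral_meas_ofReal_lt volume hh,
    ← lintegral_const_mul' _ _ ENNReal.ofNat_ne_top]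
  exact (le_lintegral_add _ _).trans (lintegral_mono fun t => hlevel _)

lemma midpointPrekopaLeindler_real_of_iSup_ne_top (hf : Measurable f) (hg : Measurable g)
    (hh : Measurable h) (hfg : ∀ x y, f x * g y ≤ h ((x + y) / 2) ^ 2)
    (hf_top : ⨆ x, f x ≠ ∞) (hg_top : ⨆ x, g x ≠ ∞) :
    (∫⁻ x, f x) * (∫⁻ x, g x) ≤ (∫⁻ x, h x) ^ 2 := by
  rcases eq_or_ne (⨆ x, f x) 0 with hf0 | hf0
  · simp [funext (ENNReal.iSup_eq_zero.1 hf0)]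
  rcases eq_or_ne (⨆ x, g x) 0 with hg0 | hg0
  · simp [funext (ENNReal.iSup_eq_zero.1 hg0)]
  -- rescale `f` and `g` by reciprocal factors so that their suprema agree
  set c : ℝ≥0∞ := ((⨆ x, g x) / ⨆ x, f x) ^ (2⁻¹ : ℝ)
  have hquot₀ : (⨆ x, g x) / (⨆ x, f x) ≠ 0 := ENNReal.div_ne_zero.2 ⟨hg0, hf_top⟩
  have hquot_top : (⨆ x, g x) / (⨆ x, f x) ≠ ∞ := ENNReal.div_ne_top hg_top hf0
  have hc₀ : c ≠ 0 := (ENNReal.rpow_pos (pos_iff_ne_zero.2 hquot₀) hquot_top).ne'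
  have hc_top : c ≠ ∞ := ENNReal.rpow_ne_top_of_nonneg (by norm_num) hquot_top
  have hcc : c * c = (⨆ x, g x) / ⨆ x, f x := by
    rw [← ENNReal.rpow_add _ _ hquot₀ hquot_top]
    norm_num
  have hsup : ⨆ x, c * f x = ⨆ x, c⁻¹ * g x := by
    have hg_eq : ⨆ x, g x = c * c * ⨆ x, f x := by rw [hcc, ENNReal.div_mul_cancel hf0 hf_top]
    rw [← ENNReal.mul_iSup, ← ENNReal.mul_iSup, hg_eq, mul_assoc, ← mul_assoc c⁻¹,
      ENNReal.inv_mul_cancel hc₀ hc_top, one_mul]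
  have := lintegral_add_lintegral_le_two_mul_of_iSup_eq (hf.const_mul c) (hg.const_mul c⁻¹) hh
    (fun x y => by
      rw [mul_mul_mul_comm, ENNReal.mul_inv_cancel hc₀ hc_top, one_mul]
      exact hfg x y)
    hsup
  rw [lintegral_const_mul _ hf, lintegral_const_mul _ hg] at this
  calc (∫⁻ x, f x) * (∫⁻ x, g x) = (c * ∫⁻ x, f x) * (c⁻¹ * ∫⁻ x, g x) := by
        rw [mul_mul_mul_comm, ENNReal.mul_inv_cancel hc₀ hc_top, one_mul]
    _ ≤ (∫⁻ x, h x) ^ 2 := ENNReal.mul_le_sq_of_add_le_two_mul this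

lemma lintegral_eq_iSup_lintegral_min_natCast {α : Type*} [MeasurableSpace α] {μ : Measure α}
    {φ : α → ℝ≥0∞} (hφ : Measurable φ) : ∫⁻ x, φ x ∂μ = ⨆ N : ℕ, ∫⁻ x, min (φ x) N ∂μ := by
  rw [← lintegral_iSup (fun N => hφ.min measurable_const)
    fun N M hNM x => min_le_min_left _ (Nat.mono_cast hNM)]
  simp_rw [← inf_iSup_eq, ENNReal.iSup_natCast, inf_top_eq]

lemma midpointPrekopaLeindler_real :
    MidpointPrekopaLeindler (volume : Measure ℝ) (fun x y => (x + y) / 2) := by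
  intro f g h hf hg hh hfg
  have hsup_top : ∀ (φ : ℝ → ℝ≥0∞) (N : ℕ), ⨆ x, min (φ x) N ≠ ∞ := fun φ N =>
    ((iSup_le fun x => min_le_right _ _).trans_lt (ENNReal.natCast_lt_top N)).ne
  rw [lintegral_eq_iSup_lintegral_min_natCast hf, lintegral_eq_iSup_lintegral_min_natCast hg,
    ENNReal.iSup_mul]
  refine iSup_le fun N => ?_
  rw [ENNReal.mul_iSup]
  exact iSup_le fun M => midpointPrekopaLeindler_real_of_iSup_ne_top
    (hf.min measurable_const) (hg.min measurable_const) hh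
    (fun x y => (mul_le_mul' (min_le_left _ _) (min_le_left _ _)).trans (hfg x y))
    (hsup_top f N) (hsup_top g M)

end Real

namespace MidpointPrekopaLeindler

variable {α β : Type*} [MeasurableSpace α] [MeasurableSpace β] {μ : Measure α} {ν : Measure β}
  {midα : α → α → α} {midβ : β → β → β}

lemma prod [SFinite μ] [SFinite ν] (hμ : MidpointPrekopaLeindler μ midα)
    (hν : MidpointPrekopaLeindler ν midβ) :
    MidpointPrekopaLeindler (μ.prod ν) (fun p q => (midα p.1 q.1, midβ p.2 q.2)) := by
  intro f g h hf hg hh hfg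
  have hfibre := fun x₁ x₂ => hν (fun y => f (x₁, y)) (fun y => g (x₂, y))
    (fun y => h (midα x₁ x₂, y)) (hf.comp measurable_prodMk_left)
    (hg.comp measurable_prodMk_left) (hh.comp measurable_prodMk_left)
    (fun y₁ y₂ => hfg (x₁, y₁) (x₂, y₂))
  rw [lintegral_prod _ hf.aemeasurable, lintegral_prod _ hg.aemeasurable,
    lintegral_prod _ hh.aemeasurable]
  exact hμ _ _ _ hf.lintegral_prod_right' hg.lintegral_prod_right' hh.lintegral_prod_right' hfibre

lemma of_measurePreserving (hμ : MidpointPrekopaLeindler μ midα) (e : α ≃ᵐ β)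
    (he : MeasurePreserving e μ ν) (hmid : ∀ x y, e (midα x y) = midβ (e x) (e y)) :
    MidpointPrekopaLeindler ν midβ := by
  intro f g h hf hg hh hfg
  rw [← he.lintegral_comp hf, ← he.lintegral_comp hg, ← he.lintegral_comp hh]
  exact hμ _ _ _ (hf.comp e.measurable) (hg.comp e.measurable) (hh.comp e.measurable)
    fun x y => hmid x y ▸ hfg (e x) (e y)

lemma lintegral_le_of_mul_neg_le_sq [InvolutiveNeg α] [MeasurableNeg α] [μ.IsNegInvariant]
    (hμ : MidpointPrekopaLeindler μ midα) {f h : α → ℝ≥0∞} (hf : Measurable f)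
    (hh : Measurable h) (hfh : ∀ x y, f x * f (-y) ≤ h (midα x y) ^ 2) :
    ∫⁻ x, f x ∂μ ≤ ∫⁻ x, h x ∂μ := by
  have := hμ f (fun y => f (-y)) h hf (hf.comp measurable_neg) hh hfh
  rwa [lintegral_neg_eq_self, ← sq, ENNReal.pow_le_pow_left_iff two_ne_zero] at this

end MidpointPrekopaLeindler

lemma midpointPrekopaLeindler_pi (m : ℕ) :
    MidpointPrekopaLeindler (volume : Measure (Fin m → ℝ)) (fun x y j => (x j + y j) / 2) := by
  induction m with
  | zero =>
    intro f g h _ _ _ hfg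
    have hconst (φ : (Fin 0 → ℝ) → ℝ≥0∞) : ∫⁻ x, φ x = φ 0 := by
      rw [funext fun x => congrArg φ (Subsingleton.elim x 0), lintegral_const, volume_pi,
        Measure.pi_univ, Finset.univ_eq_empty, Finset.prod_empty, mul_one]
    rw [hconst, hconst, hconst]
    exact (hfg 0 0).trans_eq (by congr 2; exact Subsingleton.elim _ _)
  | succ m ih =>
    refine (midpointPrekopaLeindler_real.prod ih).of_measurePreserving
      (MeasurableEquiv.piFinSuccAbove (fun _ => ℝ) 0).symm
      (volume_preserving_piFinSuccAbove (fun _ => ℝ) 0).symm fun p q => ?_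
    exact (Fin.insertNth_binop (α := fun _ => ℝ) (fun _ a b => (a + b) / 2) 0 p.1 q.1 p.2 q.2)

lemma isClosed_polarBody {n : ℕ} (K : Set (E n)) : IsClosed (polarBody K) := by
  simp only [polarBody, ofPred_forall]
  exact isClosed_biInter fun x _ => isClosed_le (continuous_const.inner continuous_id)
    continuous_const

lemma midpoint_mem_polarBody_steiner {n : ℕ} {K : Set (E n)} (hsym : K = -K) {u : E n}
    (hu : ⟪u, u⟫_ℝ = 1) {a b : E n} {γ : ℝ} (hau : ⟪a, u⟫_ℝ = γ) (hbu : ⟪b, u⟫_ℝ = γ)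
    (ha : a ∈ polarBody K) (hb : (2 * γ) • u - b ∈ polarBody K) :
    midpoint ℝ a b ∈ polarBody (steiner u K) := by
  rintro z ⟨s, t, hs, ht, hzu⟩
  have hs' := ha _ hs
  have ht' := hb _ (show -(z - ⟪z, u⟫_ℝ • u + t • u) ∈ K by rw [hsym]; exact neg_mem_neg.2 ht)
  rw [real_inner_comm] at hau hbu
  simp only [midpoint_eq_smul_add, invOf_eq_inv, inner_add_left, inner_sub_left, inner_neg_left,
    real_inner_smul_left, inner_add_right, inner_sub_right, real_inner_smul_right, hu, hau, hbu,
    hzu] at hs' ht' ⊢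
  linarith

lemma mul_le_sq_midpoint_of_logConcave {V : Type*} [AddCommGroup V] [Module ℝ V] {f : V → ℝ}
    (hf0 : ∀ x, 0 ≤ f x)
    (hflc : ∀ x y : V, ∀ t ∈ Icc (0 : ℝ) 1, f x ^ (1 - t) * f y ^ t ≤ f ((1 - t) • x + t • y))
    (x y : V) : f x * f y ≤ f (midpoint ℝ x y) ^ 2 := by
  have := hflc x y (1 / 2) ⟨by norm_num, by norm_num⟩
  rw [show (1 : ℝ) - 1 / 2 = 1 / 2 by norm_num, ← Real.sqrt_eq_rpow, ← Real.sqrt_eq_rpow] at this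
  calc f x * f y = (√(f x) * √(f y)) ^ 2 := by
        rw [mul_pow, Real.sq_sqrt (hf0 x), Real.sq_sqrt (hf0 y)]
    _ ≤ f (midpoint ℝ x y) ^ 2 := by
        refine pow_le_pow_left₀ (by positivity) (this.trans_eq ?_) 2
        rw [midpoint_eq_smul_add, invOf_eq_inv, smul_add, one_div]

namespace EuclideanSpace

variable {m : ℕ} (i : Fin (m + 1))

def insertNth (γ : ℝ) (w : Fin m → ℝ) : EuclideanSpace ℝ (Fin (m + 1)) :=
  WithLp.toLp 2 (i.insertNth γ w)

@[simp]
lemma insertNth_apply_same (γ : ℝ) (w : Fin m → ℝ) : insertNth i γ w i = γ := by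
  simp [insertNth]

@[simp]
lemma insertNth_apply_succAbove (γ : ℝ) (w : Fin m → ℝ) (j : Fin m) :
    insertNth i γ w (i.succAbove j) = w j := by
  simp [insertNth]

lemma measurable_insertNth (γ : ℝ) : Measurable (insertNth i γ) :=
  (WithLp.measurable_toLp 2 _).comp
    ((MeasurableEquiv.piFinSuccAbove (fun _ => ℝ) i).symm.measurable.comp measurable_prodMk_left)

lemma lintegral_eq_lintegral_insertNth {F : EuclideanSpace ℝ (Fin (m + 1)) → ℝ≥0∞}
    (hF : Measurable F) : ∫⁻ x, F x = ∫⁻ γ, ∫⁻ w, F (insertNth i γ w) := by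
  let Θ := (MeasurableEquiv.toLp 2 (Fin (m + 1) → ℝ)).symm.trans
    (MeasurableEquiv.piFinSuccAbove (fun _ => ℝ) i)
  have hΘ : MeasurePreserving Θ := (volume_preserving_piFinSuccAbove (fun _ => ℝ) i).comp
    (EuclideanSpace.volume_preserving_symm_measurableEquiv_toLp (Fin (m + 1)))
  rw [← hΘ.symm.lintegral_comp hF, Measure.volume_eq_prod,
    lintegral_prod (fun p => F (Θ.symm p)) (hF.comp Θ.symm.measurable).aemeasurable]
  rfl

lemma inner_insertNth_single (γ : ℝ) (w : Fin m → ℝ) : ⟪insertNth i γ w, single i 1⟫_ℝ = γ := by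
  simp [inner_single_right]

lemma insertNth_neg (γ : ℝ) (w : Fin m → ℝ) :
    insertNth i γ (-w) = (2 * γ) • single i 1 - insertNth i γ w := by
  ext j
  cases j using i.succAboveCases
  · simp
    ring
  · simp [Fin.succAbove_ne]

lemma insertNth_midpoint (γ : ℝ) (v w : Fin m → ℝ) :
    insertNth i γ (fun j => (v j + w j) / 2) =
      midpoint ℝ (insertNth i γ v) (insertNth i γ w) := by
  ext j
  cases j using i.succAboveCases <;> simp [midpoint_eq_smul_add] <;> ring

lemma apply_insertNth_neg {f : EuclideanSpace ℝ (Fin (m + 1)) → ℝ}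
    (hf : ∀ (x : EuclideanSpace ℝ (Fin (m + 1))) (ε : Fin (m + 1) → ℝ),
      (∀ j, ε j = 1 ∨ ε j = -1) → f (WithLp.toLp 2 (fun j => ε j * x j)) = f x)
    (γ : ℝ) (w : Fin m → ℝ) : f (insertNth i γ (-w)) = f (insertNth i γ w) := by
  let ε : Fin (m + 1) → ℝ := i.insertNth 1 fun _ => -1
  have hε : ∀ j, ε j = 1 ∨ ε j = -1 := fun j => by
    cases j using i.succAboveCases <;> simp [ε]
  convert hf (insertNth i γ w) ε hε using 2
  ext j
  cases j using i.succAboveCases <;> simp [ε]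

end EuclideanSpace

lemma Set.indicator_mul_indicator_le_sq {X : Type*} {A B : Set X} {g : X → ℝ≥0∞} {a b c : X}
    (hmem : a ∈ A → b ∈ A → c ∈ B) (hg : g a * g b ≤ g c ^ 2) :
    A.indicator g a * A.indicator g b ≤ B.indicator g c ^ 2 := by
  by_cases ha : a ∈ A
  · by_cases hb : b ∈ A
    · simpa [ha, hb, hmem ha hb] using hg
    · simp [hb]
  · simp [ha]

theorem blaschke_santalo_stmt_general (n : ℕ) (f : E n → ℝ) (hfm : Measurable f) (hf0 : ∀ x, 0 ≤ f x)
    (hflc : ∀ x y : E n, ∀ t : ℝ, t ∈ Set.Icc (0 : ℝ) 1 →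
      f x ^ (1 - t) * f y ^ t ≤ f ((1 - t) • x + t • y))
    (hfu : ∀ (x : E n) (ε : Fin n → ℝ), (∀ i, ε i = 1 ∨ ε i = -1) →
      f (WithLp.toLp 2 (fun i => ε i * x i) : E n) = f x)
    (μ : Measure (E n)) (hμ : μ = volume.withDensity fun x => ENNReal.ofReal (f x))
    (K : Set (E n)) (hsym : K = -K)
    (i : Fin n) (u : E n) (hu : u = EuclideanSpace.single i (1 : ℝ)) :
    μ (polarBody K) ≤ μ (polarBody (steiner u K)) := by
  obtain ⟨m, rfl⟩ : ∃ m, n = m + 1 := ⟨n - 1, (Nat.succ_pred_eq_of_pos i.pos).symm⟩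
  subst hμ hu
  set ρ : E (m + 1) → ℝ≥0∞ := fun x => ENNReal.ofReal (f x)
  have hρ : Measurable ρ := hfm.ennreal_ofReal
  have hKpolar := (isClosed_polarBody K).measurableSet
  have hSpolar := (isClosed_polarBody (steiner (EuclideanSpace.single i 1) K)).measurableSet
  rw [withDensity_apply _ hKpolar, withDensity_apply _ hSpolar, ← lintegral_indicator hKpolar,
    ← lintegral_indicator hSpolar,
    EuclideanSpace.lintegral_eq_lintegral_insertNth i (hρ.indicator hKpolar),
    EuclideanSpace.lintegral_eq_lintegral_insertNth i (hρ.indicator hSpolar)]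
  refine lintegral_mono fun γ => (midpointPrekopaLeindler_pi m).lintegral_le_of_mul_neg_le_sq
    ((hρ.indicator hKpolar).comp (EuclideanSpace.measurable_insertNth i γ))
    ((hρ.indicator hSpolar).comp (EuclideanSpace.measurable_insertNth i γ)) fun v w => ?_
  rw [EuclideanSpace.insertNth_midpoint]
  refine Set.indicator_mul_indicator_le_sq (fun hv hw => ?_) ?_
  · refine midpoint_mem_polarBody_steiner hsym (by simp)
      (EuclideanSpace.inner_insertNth_single i γ v) (EuclideanSpace.inner_insertNth_single i γ w)
      hv ?_
    rwa [← EuclideanSpace.insertNth_neg]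
  · simp only [ρ]
    rw [EuclideanSpace.apply_insertNth_neg i hfu, ← ENNReal.ofReal_mul (hf0 _),
      ← ENNReal.ofReal_pow (hf0 _)]
    exact ENNReal.ofReal_le_ofReal (mul_le_sq_midpoint_of_logConcave hf0 hflc _ _)

theorem blaschke_santalo_stmt (n : ℕ) (f : E n → ℝ) (hfm : Measurable f) (hf0 : ∀ x, 0 ≤ f x)
    (hflc : ∀ x y : E n, ∀ t : ℝ, t ∈ Set.Icc (0 : ℝ) 1 →
      f x ^ (1 - t) * f y ^ t ≤ f ((1 - t) • x + t • y))
    (hfu : ∀ (x : E n) (ε : Fin n → ℝ), (∀ i, ε i = 1 ∨ ε i = -1) →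
      f (WithLp.toLp 2 (fun i => ε i * x i) : E n) = f x)
    (μ : Measure (E n)) (hμ : μ = volume.withDensity fun x => ENNReal.ofReal (f x))
    (K : Set (E n)) (hK : IsConvexBody K) (hsym : K = -K)
    (i : Fin n) (u : E n) (hu : u = EuclideanSpace.single i (1 : ℝ)) :
    μ (polarBody K) ≤ μ (polarBody (steiner u K)) :=
  blaschke_santalo_stmt_general n f hfm hf0 hflc hfu μ hμ K hsym i u hu
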